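/- arXiv:1903.00956 — 2 statements merged into one kernel-verified Lean document; each statement's English description precedes it below -/
import Mathlib

section
/- Let V be a 3-dimensional real inner product space, A : V → V a self-adjoint trace-free linear map, and ω ∈ V a vector with ‖ω‖² = 2. Let Aω^⊥ denote the orthogonal projection of Aω onto the orthogonal complement of ω. Then ‖A‖² - (1/2)‖Aω^⊥‖² ≥ (3/8)⟨Aω, ω⟩² + (1/2)‖Aω^⊥‖², where ‖A‖² is the sum of squares of the matrix entries of A in any orthonormal basis (the Hilbert–Schmidt norm squared). -/
open RealInnerProductSpace

lemma trace_onb_aux {V : Type*} [NormedAddCommGroup V] [InnerProductSpace ℝ V]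
    [FiniteDimensional ℝ V] (b : OrthonormalBasis (Fin 3) ℝ V) (T : V →ₗ[ℝ] V) :
    LinearMap.trace ℝ V T = ∑ i, ⟪b i, T (b i)⟫ := by
  rw [LinearMap.trace_eq_matrix_trace ℝ b.toBasis, Matrix.trace]
  simp [Matrix.diag, LinearMap.toMatrix_apply, OrthonormalBasis.coe_toBasis_repr_apply,
    OrthonormalBasis.repr_apply_apply, OrthonormalBasis.coe_toBasis]

/-- For a self-adjoint trace-free operator `A` on a 3-dimensional real inner product
space and `ω` with `‖ω‖² = 2`, with `Aω^⊥ = Aω - (⟪Aω,ω⟫/2)ω` the projection of `Aω`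
orthogonal to `ω`, one has
`‖A‖²_HS - (1/2)‖Aω^⊥‖² ≥ (3/8)⟪Aω,ω⟫² + (1/2)‖Aω^⊥‖².`
Here `‖A‖²_HS = trace(A∘A)`, which for self-adjoint `A` is the sum of squares of the
matrix entries of `A` in any orthonormal basis (the Hilbert–Schmidt norm squared). -/
theorem stmt_2 {V : Type*} [NormedAddCommGroup V] [InnerProductSpace ℝ V]
    [FiniteDimensional ℝ V] (h3 : Module.finrank ℝ V = 3)
    (A : V →ₗ[ℝ] V) (hA : LinearMap.IsSymmetric A)
    (htr : LinearMap.trace ℝ V A = 0) (ω : V) (hω : ⟪ω, ω⟫ = 2) :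
    LinearMap.trace ℝ V (A ∘ₗ A) - (1 / 2) * ‖A ω - (⟪A ω, ω⟫ / 2) • ω‖ ^ 2 ≥
      (3 / 8) * ⟪A ω, ω⟫ ^ 2 + (1 / 2) * ‖A ω - (⟪A ω, ω⟫ / 2) • ω‖ ^ 2 := by
  have h2 : (0:ℝ) < Real.sqrt 2 := by positivity
  have hs2 : Real.sqrt 2 * Real.sqrt 2 = 2 := Real.mul_self_sqrt (by norm_num)
  have hnω : ‖ω‖ = Real.sqrt 2 := by
    have h1 : ‖ω‖ ^ 2 = 2 := by rw [← real_inner_self_eq_norm_sq, hω]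
    rw [← Real.sqrt_sq (norm_nonneg ω), h1]
  have hnorm : ‖(Real.sqrt 2)⁻¹ • ω‖ = 1 := by
    rw [norm_smul, hnω, norm_inv, Real.norm_eq_abs, abs_of_pos h2]
    field_simp
  set v : Fin 3 → V := fun _ => (Real.sqrt 2)⁻¹ • ω with hv
  have horth : Orthonormal ℝ (({0} : Set (Fin 3)).restrict v) := by
    constructor
    · intro i; exact hnorm
    · intro i j hij
      exfalso
      apply hij
      have hi := i.2
      have hj := j.2
      simp only [Set.mem_singleton_iff] at hi hj
      exact Subtype.ext (hi.trans hj.symm)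
  obtain ⟨b, hb⟩ := horth.exists_orthonormalBasis_extension_of_card_eq (by simp [h3])
  have hb0 : b 0 = (Real.sqrt 2)⁻¹ • ω := hb 0 rfl
  have hω' : ω = Real.sqrt 2 • b 0 := by
    rw [hb0, smul_smul, mul_inv_cancel₀ h2.ne', one_smul]
  have par : ∀ x : V, ⟪x, x⟫ = ∑ j, ⟪x, b j⟫ ^ 2 := by
    intro x
    rw [← b.sum_inner_mul_inner x x]
    refine Finset.sum_congr rfl fun j _ => ?_
    rw [real_inner_comm (b j) x, sq]
  -- trace of A
  have htrA : ⟪A (b 0), b 0⟫ + ⟪A (b 1), b 1⟫ + ⟪A (b 2), b 2⟫ = 0 := by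
    have := trace_onb_aux b A
    rw [htr, Fin.sum_univ_three] at this
    have e0 := real_inner_comm (b 0) (A (b 0))
    have e1 := real_inner_comm (b 1) (A (b 1))
    have e2 := real_inner_comm (b 2) (A (b 2))
    linarith
  -- trace of A∘A
  have htrAA : LinearMap.trace ℝ V (A ∘ₗ A) =
      ∑ i, ∑ j, ⟪A (b i), b j⟫ ^ 2 := by
    rw [trace_onb_aux b (A ∘ₗ A)]
    refine Finset.sum_congr rfl fun i _ => ?_
    rw [LinearMap.comp_apply, ← hA (b i) (A (b i)), par (A (b i))]
  have hAωω : ⟪A ω, ω⟫ = 2 * ⟪A (b 0), b 0⟫ := by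
    rw [hω', map_smul, real_inner_smul_left, real_inner_smul_right, ← mul_assoc, hs2]
  have hAA : ⟪A ω, A ω⟫ = 2 * ∑ j, ⟪A (b 0), b j⟫ ^ 2 := by
    rw [hω', map_smul, real_inner_smul_left, real_inner_smul_right, ← mul_assoc, hs2,
      par (A (b 0))]
  have hperp : ‖A ω - (⟪A ω, ω⟫ / 2) • ω‖ ^ 2 =
      2 * (⟪A (b 0), b 1⟫ ^ 2 + ⟪A (b 0), b 2⟫ ^ 2) := by
    rw [← real_inner_self_eq_norm_sq]
    have hc : ⟪ω, A ω⟫ = 2 * ⟪A (b 0), b 0⟫ := by rw [real_inner_comm]; exact hAωω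
    simp only [inner_sub_left, inner_sub_right, real_inner_smul_left, real_inner_smul_right,
      hω, hAA, hAωω, hc, Fin.sum_univ_three]
    ring
  -- symmetry of the matrix entries
  have hsym : ∀ i j : Fin 3, ⟪A (b i), b j⟫ = ⟪A (b j), b i⟫ := by
    intro i j
    rw [hA (b i) (b j), real_inner_comm]
  have s01 : ⟪A (b 1), b 0⟫ ^ 2 = ⟪A (b 0), b 1⟫ ^ 2 := by rw [hsym 1 0]
  have s02 : ⟪A (b 2), b 0⟫ ^ 2 = ⟪A (b 0), b 2⟫ ^ 2 := by rw [hsym 2 0]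
  have s12 : ⟪A (b 2), b 1⟫ ^ 2 = ⟪A (b 1), b 2⟫ ^ 2 := by rw [hsym 2 1]
  have hd : ⟪A (b 0), b 0⟫ ^ 2 = (⟪A (b 1), b 1⟫ + ⟪A (b 2), b 2⟫) ^ 2 := by
    rw [show ⟪A (b 0), b 0⟫ = -(⟪A (b 1), b 1⟫ + ⟪A (b 2), b 2⟫) from by linarith]; ring
  rw [htrAA, hperp, hAωω]
  simp only [Fin.sum_univ_three]
  nlinarith [s01, s02, s12, hd, sq_nonneg (⟪A (b 1), b 1⟫ - ⟪A (b 2), b 2⟫),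
    sq_nonneg (⟪A (b 1), b 2⟫)]
end

section
/- Let V be a 3-dimensional real inner product space, A : V → V self-adjoint and trace-free, and ω ∈ V with ‖ω‖² = 2. Write w = ⟨Aω,ω⟩ and q = ‖Aω^⊥‖² (the squared norm of the component of Aω orthogonal to ω). Then for every real number s: 8(‖A‖²_{HS} - q/2) - s·w ≥ 3w² - s·w + 4q. -/
/-!
Put `ω = √2 e` with `e` a unit vector and write `aᵢⱼ` for the matrix of `A` in an orthonormal
basis `e = b₀, b₁, b₂`. Then `w = 2a₀₀`, `q = 2(a₀₁² + a₀₂²)` and `trace (A ∘ A) = ∑ aᵢⱼ²`, so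
the claim reduces to `a₁₁² + a₂₂² + 2a₁₂² ≥ a₀₀² / 2`. Since `A` is trace-free,
`a₀₀ = -(a₁₁ + a₂₂)`, and this is `(a₁₁ - a₂₂)² / 2 + 2a₁₂² ≥ 0`; this last step is where
`dim V = 3` enters.
-/

open RealInnerProductSpace

namespace LinearMap.IsSymmetric

variable {V : Type*} [NormedAddCommGroup V] [InnerProductSpace ℝ V] {A : V →ₗ[ℝ] V}

theorem trace_comp_self_eq_sum_norm_sq {ι : Type*} [Fintype ι] (hA : A.IsSymmetric)
    (b : OrthonormalBasis ι ℝ V) : trace ℝ V (A ∘ₗ A) = ∑ i, ‖A (b i)‖ ^ 2 := by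
  rw [trace_eq_sum_inner _ b]
  refine Fintype.sum_congr _ _ fun i => ?_
  rw [comp_apply, ← hA, real_inner_self_eq_norm_sq]

theorem two_mul_norm_sq_sub_le_trace_comp_self [FiniteDimensional ℝ V]
    (h3 : Module.finrank ℝ V = 3) (hA : A.IsSymmetric) (htr : trace ℝ V A = 0)
    {e : V} (he : ‖e‖ = 1) :
    2 * ‖A e‖ ^ 2 - ⟪A e, e⟫ ^ 2 / 2 ≤ trace ℝ V (A ∘ₗ A) := by
  have he' : Orthonormal ℝ (({0} : Set (Fin 3)).domRestrict fun _ => e) :=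
    orthonormal_subsingleton_iff.2 fun _ => he
  obtain ⟨b, hb⟩ := he'.exists_orthonormalBasis_extension_of_card_eq (by simpa using h3)
  obtain rfl : b 0 = e := hb 0 rfl
  set a : Fin 3 → Fin 3 → ℝ := fun i j => ⟪b j, A (b i)⟫
  have hsymm : ∀ i j, a i j = a j i := fun i j => by
    change ⟪b j, A (b i)⟫ = ⟪b i, A (b j)⟫
    rw [← hA, real_inner_comm]
  have hrow : ∀ i, ‖A (b i)‖ ^ 2 = a i 0 ^ 2 + a i 1 ^ 2 + a i 2 ^ 2 := fun i => by
    rw [← b.sum_sq_inner_right, Fin.sum_univ_three]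
  have hdiag : a 0 0 = -(a 1 1 + a 2 2) := by
    have : a 0 0 + a 1 1 + a 2 2 = 0 := by
      rw [← htr, trace_eq_sum_inner A b, Fin.sum_univ_three]
    linarith
  rw [real_inner_comm]
  change 2 * ‖A (b 0)‖ ^ 2 - a 0 0 ^ 2 / 2 ≤ _
  rw [hA.trace_comp_self_eq_sum_norm_sq b, Fin.sum_univ_three, hrow, hrow, hrow,
    hsymm 1 0, hsymm 2 0, hsymm 2 1, hdiag]
  nlinarith [sq_nonneg (a 1 1 - a 2 2), sq_nonneg (a 1 2)]

end LinearMap.IsSymmetric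

/-- Let `A` be self-adjoint and trace-free on a 3-dimensional real inner product
space and `ω` with `‖ω‖² = 2`. Write `w = ⟪Aω,ω⟫` and `q = ‖Aω^⊥‖²` where
`Aω^⊥ = Aω - (w/2)ω`. Then for every real `s`:
`8(‖A‖²_HS - q/2) - s·w ≥ 3w² - s·w + 4q`,
with `‖A‖²_HS = trace(A∘A)` the Hilbert–Schmidt norm squared. -/
theorem stmt_10 {V : Type*} [NormedAddCommGroup V] [InnerProductSpace ℝ V]
    [FiniteDimensional ℝ V] (h3 : Module.finrank ℝ V = 3)
    (A : V →ₗ[ℝ] V) (hA : LinearMap.IsSymmetric A)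
    (htr : LinearMap.trace ℝ V A = 0) (ω : V) (hω : ⟪ω, ω⟫ = 2)
    (w q : ℝ) (hw : w = ⟪A ω, ω⟫) (hq : q = ‖A ω - (w / 2) • ω‖ ^ 2) :
    ∀ s : ℝ, 8 * (LinearMap.trace ℝ V (A ∘ₗ A) - q / 2) - s * w ≥
      3 * w ^ 2 - s * w + 4 * q := by
  intro s
  obtain ⟨e, he, rfl⟩ : ∃ e : V, ‖e‖ = 1 ∧ √2 • e = ω := by
    refine ⟨(√2)⁻¹ • ω, ?_, smul_inv_smul₀ (by positivity) ω⟩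
    rw [norm_smul, norm_inv, Real.norm_of_nonneg (Real.sqrt_nonneg 2), norm_eq_sqrt_real_inner,
      hω, inv_mul_cancel₀ (by positivity)]
  have hw' : w = 2 * ⟪A e, e⟫ := by
    rw [hw, map_smul, real_inner_smul_left, real_inner_smul_right, ← mul_assoc,
      Real.mul_self_sqrt zero_le_two]
  have hq' : q = 2 * (‖A e‖ ^ 2 - ⟪A e, e⟫ ^ 2) := by
    rw [hq, hw', map_smul, mul_div_cancel_left₀ _ two_ne_zero, smul_comm, ← smul_sub, norm_smul,
      mul_pow, Real.norm_of_nonneg (Real.sqrt_nonneg 2), Real.sq_sqrt zero_le_two,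
      norm_sub_sq_real, real_inner_smul_right, norm_smul, he, mul_one, Real.norm_eq_abs, sq_abs]
    ring
  have hkey := hA.two_mul_norm_sq_sub_le_trace_comp_self h3 htr he
  rw [hw', hq']
  linarith
end
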